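/- Let T be a simplicial tree, G ≤ Aut(T), and let g₁, g₂, g₃ ∈ G be supported in pairwise disjoint half-trees. Then for every g ∈ G at least one of the following holds: (1) [g₁^g, g₁] = 1 or [g₂^g, g₂] = 1 or [g₃^g, g₃] = 1; (2) [g_i^g, g_j] = 1 for all i ≠ j in {1,2,3}. In particular, for every g ∈ G there exist i, j ∈ {1,2,3} with [g_i^g, g_j] = 1. -/

import Mathlib

open Set

universe v

variable {V : Type v}

/-- A permutation of the vertex set is an automorphism of the graph `T`. -/
def IsAut (T : SimpleGraph V) (g : Equiv.Perm V) : Prop :=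
  ∀ u v : V, T.Adj (g u) (g v) ↔ T.Adj u v

/-- The half-tree determined by an (oriented) edge `(u, v)`: the set of vertices whose
geodesic to `u` passes through `v`. -/
def halfTree (T : SimpleGraph V) (u v : V) : Set V :=
  {w : V | ∀ p : T.Walk w u, v ∈ p.support}

/-- A half-tree of `T`. -/
def IsHalfTree (T : SimpleGraph V) (A : Set V) : Prop :=
  ∃ u v : V, T.Adj u v ∧ A = halfTree T u v

/-- A permutation is supported in a set of vertices `A` if it fixes the complement of `A`
pointwise. -/
def SupportedIn (g : Equiv.Perm V) (A : Set V) : Prop :=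
  ∀ w : V, w ∉ A → g w = w

/-!
Two half-trees of a tree are disjoint, nested, or together cover the tree. Suppose `g` moves
`Aᵢ` onto a set meeting `Aⱼ`, `i ≠ j`. If `g Aᵢ ⊆ Aⱼ` then `g Aᵢ` misses `Aᵢ`; if `Aⱼ ⊆ g Aᵢ`
then `g Aⱼ` misses `Aⱼ`; and if `g Aᵢ ∪ Aⱼ` is everything then `g Aₖ ⊆ Aⱼ` misses `Aₖ` for the
third index `k`. Hence either some `g Aᵢ` misses `Aᵢ`, or every `g Aᵢ` misses every `Aⱼ` with
`j ≠ i`. As `gᵢ^g` is supported in `g Aᵢ` and permutations with disjoint supports commute,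
this dichotomy for the sets gives the one for the commutators.
-/

open Function

/-- `X` and `Y` do not cross, in the sense of cross-free set families. -/
def NonCrossing {α : Type*} (X Y : Set α) : Prop :=
  Disjoint X Y ∨ X ⊆ Y ∨ Y ⊆ X ∨ Xᶜ ⊆ Y

lemma NonCrossing.disjoint_image_self_of_not_disjoint {α ι : Type*} {f : α → α}
    (hf : Injective f) {A : ι → Set α} (hA : Pairwise (Disjoint on A)) {i j : ι} (hij : i ≠ j)
    (hcross : NonCrossing (f '' A i) (A j)) (hmeet : ¬Disjoint (f '' A i) (A j)) :
    Disjoint (f '' A i) (A i) ∨ Disjoint (f '' A j) (A j) ∨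
      ∀ k, k ≠ i → k ≠ j → Disjoint (f '' A k) (A k) := by
  rcases hcross with h | h | h | h
  · exact absurd h hmeet
  · exact Or.inl ((hA hij).symm.mono_left h)
  · exact Or.inr (Or.inl (((Set.disjoint_image_iff hf).mpr (hA hij.symm)).mono_right h))
  · refine Or.inr (Or.inr fun k hki hkj => (hA hkj).symm.mono_left ?_)
    exact ((Set.disjoint_image_iff hf).mpr (hA hki)).subset_compl_right.trans h

section HalfTree

variable {T : SimpleGraph V} {a b c d w : V}

lemma notMem_halfTree_iff : w ∉ halfTree T a b ↔ ∃ p : T.Walk w a, b ∉ p.support := by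
  simp [halfTree]

lemma compl_halfTree_subset_of_mem (hc : c ∈ halfTree T a b) (hb : b ∈ halfTree T c d) :
    (halfTree T a b)ᶜ ⊆ halfTree T c d := by
  classical
  intro y hy p
  obtain ⟨q, hq⟩ := notMem_halfTree_iff.mp hy
  have hbp : b ∈ p.support := by
    have := hc (p.reverse.append q)
    rw [SimpleGraph.Walk.mem_support_append_iff, SimpleGraph.Walk.support_reverse,
      List.mem_reverse] at this
    exact this.resolve_right hq
  exact p.support_dropUntil_subset_support hbp (hb (p.dropUntil b hbp))

lemma eq_of_adj_of_mem_halfTree_of_notMem (hcd : T.Adj c d) (hc : c ∈ halfTree T a b)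
    (hd : d ∉ halfTree T a b) : c = b := by
  obtain ⟨p, hp⟩ := notMem_halfTree_iff.mp hd
  have := hc (.cons hcd p)
  rw [SimpleGraph.Walk.support_cons, List.mem_cons] at this
  exact (this.resolve_right hp).symm

lemma disjoint_halfTree_swap (hT : T.Preconnected) (hab : a ≠ b) :
    Disjoint (halfTree T a b) (halfTree T b a) := by
  classical
  refine Set.disjoint_left.mpr fun w hwb hwa => ?_
  let p := (hT w a).some.bypass
  have hbp : b ∈ p.support := hwb p
  exact SimpleGraph.Walk.endpoint_notMem_support_takeUntil (hT w a).some.bypass_isPath hbp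
    hab (hwa (p.takeUntil b hbp))

/-- A path to `b` avoiding `a`, followed by the edge `ba`, is a path to `a`; in an acyclic
graph it is the only one, so it passes through `b`. -/
lemma compl_halfTree_subset_halfTree_swap (hT : T.IsAcyclic) (hab : T.Adj a b) :
    (halfTree T a b)ᶜ ⊆ halfTree T b a := by
  classical
  intro w hw q
  obtain ⟨p, hp⟩ := notMem_halfTree_iff.mp hw
  by_contra ha
  have hq : (q.bypass.concat hab.symm).IsPath :=
    q.bypass_isPath.concat (fun h => ha (q.support_bypass_subset_support h)) hab.symm
  have hpq : p.bypass = q.bypass.concat hab.symm := congrArg Subtype.val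
    ((hT.subsingleton_path w a).elim ⟨p.bypass, p.bypass_isPath⟩ ⟨_, hq⟩)
  have hb : b ∈ p.bypass.support := by
    rw [hpq, SimpleGraph.Walk.support_concat]
    exact List.mem_append_left _ q.bypass.end_mem_support
  exact hp (p.support_bypass_subset_support hb)

lemma compl_halfTree (hT : T.IsTree) (hab : T.Adj a b) :
    (halfTree T a b)ᶜ = halfTree T b a :=
  (compl_halfTree_subset_halfTree_swap hT.isAcyclic hab).antisymm
    (disjoint_halfTree_swap hT.connected.preconnected hab.ne).subset_compl_left

lemma eq_and_eq_of_adj_of_mem_halfTree_of_notMem (hT : T.IsTree) (hab : T.Adj a b)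
    (hcd : T.Adj c d) (hc : c ∈ halfTree T a b) (hd : d ∉ halfTree T a b) : c = b ∧ d = a := by
  have hd' : d ∈ halfTree T b a := compl_halfTree hT hab ▸ hd
  have hc' : c ∉ halfTree T b a := compl_halfTree hT hab ▸ fun h => h hc
  exact ⟨eq_of_adj_of_mem_halfTree_of_notMem hcd hc hd,
    eq_of_adj_of_mem_halfTree_of_notMem hcd.symm hd' hc'⟩

theorem nonCrossing_halfTree (hT : T.IsTree) (hab : T.Adj a b) (hcd : T.Adj c d) :
    NonCrossing (halfTree T a b) (halfTree T c d) := by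
  have hA := compl_halfTree hT hab
  have hB := compl_halfTree hT hcd
  by_cases hc : c ∈ halfTree T a b <;> by_cases hd : d ∈ halfTree T a b
  · by_cases hb : b ∈ halfTree T c d
    · exact Or.inr (Or.inr (Or.inr (compl_halfTree_subset_of_mem hc hb)))
    · rw [← Set.mem_compl_iff, hB] at hb
      refine Or.inr (Or.inr (Or.inl (Set.compl_subset_compl.mp ?_)))
      rw [hB]
      exact compl_halfTree_subset_of_mem hd hb
  · obtain ⟨rfl, rfl⟩ := eq_and_eq_of_adj_of_mem_halfTree_of_notMem hT hab hcd hc hd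
    exact Or.inl (hA ▸ disjoint_compl_right)
  · obtain ⟨rfl, rfl⟩ := eq_and_eq_of_adj_of_mem_halfTree_of_notMem hT hab hcd.symm hd hc
    exact Or.inr (Or.inl subset_rfl)
  · rw [← Set.mem_compl_iff, hA] at hc hd
    have hA' : (halfTree T b a)ᶜ = halfTree T a b := compl_halfTree hT hab.symm
    by_cases ha : a ∈ halfTree T c d
    · exact Or.inr (Or.inl (hA' ▸ compl_halfTree_subset_of_mem hc ha))
    · rw [← Set.mem_compl_iff, hB] at ha
      refine Or.inl (Set.subset_compl_iff_disjoint_right.mp ?_)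
      rw [← hA', hB]
      exact compl_halfTree_subset_of_mem hd ha

theorem IsHalfTree.nonCrossing {A B : Set V} (hT : T.IsTree) (hA : IsHalfTree T A)
    (hB : IsHalfTree T B) : NonCrossing A B := by
  obtain ⟨a, b, hab, rfl⟩ := hA
  obtain ⟨c, d, hcd, rfl⟩ := hB
  exact nonCrossing_halfTree hT hab hcd

lemma preimage_halfTree_subset {W : Type*} {T' : SimpleGraph W} (f : T →g T')
    (hf : Injective f) : f ⁻¹' halfTree T' (f a) (f b) ⊆ halfTree T a b := fun _ hx p =>
  (List.mem_map_of_injective hf).mp (p.support_map f ▸ hx (p.map f))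

lemma image_halfTree {W : Type*} {T' : SimpleGraph W} (e : T ≃g T') :
    e '' halfTree T a b = halfTree T' (e a) (e b) := by
  refine Set.Subset.antisymm ?_ fun y hy => ⟨e.symm y, ?_, e.apply_symm_apply y⟩
  · rintro _ ⟨x, hx, rfl⟩
    exact preimage_halfTree_subset e.symm.toHom e.symm.injective (by simpa using hx)
  · exact preimage_halfTree_subset e.toHom e.injective (by simpa using hy)

lemma IsHalfTree.image {W : Type*} {T' : SimpleGraph W} {A : Set V} (e : T ≃g T')
    (hA : IsHalfTree T A) : IsHalfTree T' (e '' A) := by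
  obtain ⟨a, b, hab, rfl⟩ := hA
  exact ⟨e a, e b, e.map_adj_iff.mpr hab, image_halfTree e⟩

def IsAut.toIso {g : Equiv.Perm V} (hg : IsAut T g) : T ≃g T := ⟨g, hg _ _⟩

theorem exists_disjoint_image_self_or_disjoint_image (hT : T.IsTree) (e : T ≃g T)
    {A : Fin 3 → Set V} (hA : ∀ i, IsHalfTree T (A i)) (hd : Pairwise (Disjoint on A)) :
    (∃ i, Disjoint (e '' A i) (A i)) ∨ ∀ i j, i ≠ j → Disjoint (e '' A i) (A j) := by
  by_contra! h
  obtain ⟨hself, i, j, hij, hmeet⟩ := h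
  have hthird : ∀ i j : Fin 3, ∃ k, k ≠ i ∧ k ≠ j := by decide
  obtain ⟨k, hki, hkj⟩ := hthird i j
  have hcross := ((hA i).image e).nonCrossing hT (hA j)
  rcases hcross.disjoint_image_self_of_not_disjoint e.injective hd hij hmeet with h | h | h
  · exact hself i h
  · exact hself j h
  · exact hself k (h k hki hkj)

end HalfTree

section SupportedIn

variable {g h : Equiv.Perm V} {A B : Set V}

lemma SupportedIn.conj (hs : SupportedIn h A) : SupportedIn (g * h * g⁻¹) (g '' A) := by
  intro w hw
  have hmem : g⁻¹ w ∉ A := fun hmem => hw ⟨g⁻¹ w, hmem, by simp⟩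
  rw [Equiv.Perm.mul_apply, Equiv.Perm.mul_apply, hs _ hmem]
  exact g.apply_symm_apply w

lemma SupportedIn.commute (hg : SupportedIn g A) (hh : SupportedIn h B) (hAB : Disjoint A B) :
    Commute g h :=
  Equiv.Perm.Disjoint.commute fun x =>
    (em (x ∈ A)).symm.imp (hg x) fun hx => hh x (Set.disjoint_left.mp hAB hx)

end SupportedIn

theorem tree_disjoint_halfTrees_commutation_general
    (T : SimpleGraph V) (hT : T.IsTree)
    (G : Subgroup (Equiv.Perm V))
    (hAut : ∀ g ∈ G, IsAut T g)
    (A₁ A₂ A₃ : Set V)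
    (h₁ : IsHalfTree T A₁) (h₂ : IsHalfTree T A₂) (h₃ : IsHalfTree T A₃)
    (hd₁₂ : Disjoint A₁ A₂) (hd₁₃ : Disjoint A₁ A₃) (hd₂₃ : Disjoint A₂ A₃)
    (g₁ g₂ g₃ : Equiv.Perm V)
    (hs₁ : SupportedIn g₁ A₁) (hs₂ : SupportedIn g₂ A₂) (hs₃ : SupportedIn g₃ A₃) :
    ∀ g ∈ G,
      ((Commute (g * g₁ * g⁻¹) g₁ ∨ Commute (g * g₂ * g⁻¹) g₂ ∨ Commute (g * g₃ * g⁻¹) g₃) ∨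
        (∀ i j : Fin 3, i ≠ j →
          Commute (g * (![g₁, g₂, g₃] i) * g⁻¹) (![g₁, g₂, g₃] j))) ∧
      ∃ i j : Fin 3, Commute (g * (![g₁, g₂, g₃] i) * g⁻¹) (![g₁, g₂, g₃] j) := by
  intro g hg
  let A : Fin 3 → Set V := ![A₁, A₂, A₃]
  have hA : ∀ i, IsHalfTree T (A i) := fun i => by fin_cases i <;> assumption
  have hd : Pairwise (Disjoint on A) := fun i j hij => by
    fin_cases i <;> fin_cases j <;>
      first | exact absurd rfl hij | assumption | exact Disjoint.symm ‹_›
  have hs : ∀ i, SupportedIn (![g₁, g₂, g₃] i) (A i) := fun i => by fin_cases i <;> assumption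
  have hcomm : ∀ i j, Disjoint ((g : V → V) '' A i) (A j) →
      Commute (g * ![g₁, g₂, g₃] i * g⁻¹) (![g₁, g₂, g₃] j) :=
    fun i j h => (hs i).conj.commute (hs j) h
  rcases exists_disjoint_image_self_or_disjoint_image hT (hAut g hg).toIso hA hd with
    ⟨i, hi⟩ | hall
  · have hii := hcomm i i hi
    refine ⟨Or.inl ?_, i, i, hii⟩
    fin_cases i
    exacts [Or.inl hii, Or.inr (Or.inl hii), Or.inr (Or.inr hii)]
  · exact ⟨Or.inr fun i j hij => hcomm i j (hall i j hij), 0, 1, hcomm 0 1 (hall 0 1 (by decide))⟩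

/-- **(Le Boudec--Matte Bon, Lemma 3.6.)** Let `T` be a tree, `G ≤ Aut(T)` and let
`g₁, g₂, g₃ ∈ G` be supported in pairwise disjoint half-trees. Then for every `g ∈ G` at
least one of the following holds:
(1) `[g₁^g, g₁] = 1` or `[g₂^g, g₂] = 1` or `[g₃^g, g₃] = 1`;
(2) `[gᵢ^g, gⱼ] = 1` for all `i ≠ j`.
In particular there are `i, j` with `[gᵢ^g, gⱼ] = 1`. -/
theorem tree_disjoint_halfTrees_commutation
    (T : SimpleGraph V) (hT : T.IsTree)
    (G : Subgroup (Equiv.Perm V))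
    (hAut : ∀ g ∈ G, IsAut T g)
    (A₁ A₂ A₃ : Set V)
    (h₁ : IsHalfTree T A₁) (h₂ : IsHalfTree T A₂) (h₃ : IsHalfTree T A₃)
    (hd₁₂ : Disjoint A₁ A₂) (hd₁₃ : Disjoint A₁ A₃) (hd₂₃ : Disjoint A₂ A₃)
    (g₁ g₂ g₃ : Equiv.Perm V)
    (hg₁ : g₁ ∈ G) (hg₂ : g₂ ∈ G) (hg₃ : g₃ ∈ G)
    (hs₁ : SupportedIn g₁ A₁) (hs₂ : SupportedIn g₂ A₂) (hs₃ : SupportedIn g₃ A₃) :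
    ∀ g ∈ G,
      ((Commute (g * g₁ * g⁻¹) g₁ ∨ Commute (g * g₂ * g⁻¹) g₂ ∨ Commute (g * g₃ * g⁻¹) g₃) ∨
        (∀ i j : Fin 3, i ≠ j →
          Commute (g * (![g₁, g₂, g₃] i) * g⁻¹) (![g₁, g₂, g₃] j))) ∧
      ∃ i j : Fin 3, Commute (g * (![g₁, g₂, g₃] i) * g⁻¹) (![g₁, g₂, g₃] j) :=
  tree_disjoint_halfTrees_commutation_general T hT G hAut A₁ A₂ A₃ h₁ h₂ h₃ hd₁₂ hd₁₃ hd₂₃ g₁ g₂ g₃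
    hs₁ hs₂ hs₃
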